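/- arXiv:1308.3575 — 3 statements merged into one kernel-verified Lean document; each statement's English description precedes it below -/
import Mathlib

section
/- Let F_q be a finite field of characteristic 2, let α_1,…,α_n be n distinct elements of F_q, and let k be a positive integer with n ≥ 2k + 2. Then there exist nonzero elements v_1,…,v_n of F_q such that the generalized Reed–Solomon code GRS_k(α,v) = {(v_1 f(α_1),…,v_n f(α_n)) : f ∈ F_q[x], f = 0 or deg f ≤ k−1} is Euclidean self-orthogonal, i.e., GRS_k(α,v) ⊆ GRS_k(α,v)^⊥E. -/
open Finset Polynomial

/-- Key lemma: for distinct nodes, the sum of `u_i * h(α_i)` where `u_i` is the leading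
coefficient of the `i`-th Lagrange basis polynomial vanishes when `deg h < n - 1`. -/
lemma key_sum {F : Type*} [Field F] (n : ℕ) (α : Fin n → F) (hα : Function.Injective α)
    (h : Polynomial F) (hd : h.degree < ((n - 1 : ℕ) : WithBot ℕ)) (hn : 1 ≤ n) :
    ∑ i, (Lagrange.basis Finset.univ α i).leadingCoeff * h.eval (α i) = 0 := by
  have hinj : Set.InjOn α (Finset.univ : Finset (Fin n)) := hα.injOn
  have hcard : #(Finset.univ : Finset (Fin n)) = n := by simp
  have hdn : h.degree < (#(Finset.univ : Finset (Fin n)) : WithBot ℕ) := by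
    rw [hcard]
    exact lt_of_lt_of_le hd (by exact_mod_cast Nat.sub_le n 1)
  have hinterp := Lagrange.eq_interpolate hinj hdn
  have hcoeff : h.coeff (n - 1) = 0 := Polynomial.coeff_eq_zero_of_degree_lt hd
  calc ∑ i, (Lagrange.basis Finset.univ α i).leadingCoeff * h.eval (α i)
      = (Lagrange.interpolate Finset.univ α (fun i => h.eval (α i))).coeff (n - 1) := by
        rw [Lagrange.interpolate_apply, Polynomial.finset_sum_coeff]
        refine Finset.sum_congr rfl fun i _ => ?_
        rw [Polynomial.coeff_C_mul, Polynomial.leadingCoeff, Lagrange.natDegree_basis hinj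
          (Finset.mem_univ i), hcard, mul_comm]
    _ = 0 := by rw [← hinterp]; exact hcoeff

/-- The generalized Reed–Solomon code `GRS_k(α, v)`: evaluations of polynomials of degree
`< k` at the points `α i`, scaled coordinatewise by `v i`. -/
def GRS {F : Type*} [Field F] (n k : ℕ) (α v : Fin n → F) : Set (Fin n → F) :=
  {x | ∃ f : Polynomial F, f.degree < (k : ℕ) ∧ x = fun i => v i * f.eval (α i)}

/-- Over a finite field of characteristic 2, for distinct `α_1, …, α_n` and
`1 ≤ k` with `n ≥ 2k + 2`, there exist nonzero `v_1, …, v_n` such that `GRS_k(α, v)` is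
Euclidean self-orthogonal. -/
theorem GRS_euclidean_self_orthogonal (F : Type*) [Field F] [Fintype F]
    (hchar : ringChar F = 2)
    (n k : ℕ) (hk : 1 ≤ k) (hn : 2 * k + 2 ≤ n)
    (α : Fin n → F) (hα : Function.Injective α) :
    ∃ v : Fin n → F, (∀ i, v i ≠ 0) ∧
      ∀ c ∈ GRS n k α v, ∀ c' ∈ GRS n k α v, ∑ i, c i * c' i = 0 := by
  haveI : CharP F 2 := hchar ▸ ringChar.charP F
  haveI : ExpChar F 2 := ExpChar.prime (by norm_num)
  set u : Fin n → F := fun i => (Lagrange.basis Finset.univ α i).leadingCoeff with hu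
  have hu0 : ∀ i, u i ≠ 0 := fun i =>
    Polynomial.leadingCoeff_ne_zero.mpr (Lagrange.basis_ne_zero hα.injOn (Finset.mem_univ i))
  set v : Fin n → F := fun i => (frobeniusEquiv F 2).symm (u i) with hv
  have hvsq : ∀ i, v i * v i = u i := by
    intro i
    have := frobenius_apply_frobeniusEquiv_symm F 2 (u i)
    rw [frobenius_def, pow_two] at this
    exact this
  refine ⟨v, fun i => ?_, ?_⟩
  · simp only [hv]
    exact fun h => hu0 i (EmbeddingLike.map_eq_zero_iff.mp h)
  · rintro c ⟨f, hf, rfl⟩ c' ⟨g, hg, rfl⟩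
    rcases eq_or_ne f 0 with rfl | hf0
    · simp
    rcases eq_or_ne g 0 with rfl | hg0
    · simp
    have hdeg : (f * g).degree < ((n - 1 : ℕ) : WithBot ℕ) := by
      have hfk : f.natDegree < k := (Polynomial.natDegree_lt_iff_degree_lt hf0).mpr hf
      have hgk : g.natDegree < k := (Polynomial.natDegree_lt_iff_degree_lt hg0).mpr hg
      have : (f * g).natDegree < n - 1 := by
        rw [Polynomial.natDegree_mul hf0 hg0]
        omega
      exact lt_of_le_of_lt (Polynomial.degree_le_natDegree) (by exact_mod_cast this)
    have hkey := key_sum n α hα (f * g) hdeg (by omega)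
    calc ∑ i, (v i * f.eval (α i)) * (v i * g.eval (α i))
        = ∑ i, u i * (f * g).eval (α i) := by
          refine Finset.sum_congr rfl fun i _ => ?_
          rw [Polynomial.eval_mul, ← hvsq i]; ring
      _ = 0 := hkey
end

section
/- Let q be a prime power, regard F_q as a subfield of F_{q^2}, let α_1,…,α_n be n distinct elements of F_q, and let k be a positive integer with n ≥ 2k + 2. Then there exist nonzero elements v_1,…,v_n of F_{q^2} such that the code {(v_1 f(α_1),…,v_n f(α_n)) : f ∈ F_{q^2}[x], f = 0 or deg f ≤ k−1} ⊆ F_{q^2}^n is Hermitian self-orthogonal, i.e., it is contained in its Hermitian dual. -/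
open Polynomial Finset
section GRSAux
lemma exists_pow_succ_eq {E : Type*} [Field E] [Fintype E] (q : ℕ) (hq2 : 2 ≤ q)
    (hcard : Fintype.card E = q ^ 2) {u : E} (hu : u ≠ 0) (hfix : u ^ q = u) :
    ∃ v : E, v ≠ 0 ∧ v ^ (q + 1) = u := by
  classical
  obtain ⟨g, hg⟩ := IsCyclic.exists_generator (α := Eˣ)
  have hord : orderOf g = q ^ 2 - 1 := by
    rw [orderOf_eq_card_of_forall_mem_zpowers hg, Nat.card_eq_fintype_card,
      Fintype.card_units, hcard]
  set U : Eˣ := Units.mk0 u hu with hU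
  obtain ⟨m, hm⟩ := mem_powers_iff_mem_zpowers.mpr (hg U)
  have hm' : g ^ m = U := hm
  have hU1 : U ^ (q - 1) = 1 := by
    have h1 : u ^ (q - 1) * u = 1 * u := by
      rw [one_mul, ← pow_succ, Nat.sub_add_cancel (by omega)]; exact hfix
    have h2 : u ^ (q - 1) = 1 := mul_right_cancel₀ hu h1
    ext; simpa [hU] using h2
  have hdvd : (q ^ 2 - 1) ∣ m * (q - 1) := by
    rw [← hord, orderOf_dvd_iff_pow_eq_one, pow_mul, hm', hU1]
  have hfac : q ^ 2 - 1 = (q + 1) * (q - 1) := by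
    obtain ⟨r, rfl⟩ : ∃ r, q = r + 2 := ⟨q - 2, by omega⟩
    have e1 : (r + 2) ^ 2 = r * r + 4 * r + 4 := by ring
    have e3 : (r + 2 + 1) * (r + 1) = r * r + 4 * r + 3 := by ring
    rw [show r + 2 - 1 = r + 1 from by omega]
    omega
  have hqd : (q + 1) ∣ m := by
    rw [hfac] at hdvd
    exact (Nat.mul_dvd_mul_iff_right (by omega : 0 < q - 1)).mp hdvd
  obtain ⟨t, rfl⟩ := hqd
  refine ⟨((g ^ t : Eˣ) : E), Units.ne_zero _, ?_⟩
  have h4 : ((g ^ t) ^ (q + 1) : Eˣ) = U := by rw [← pow_mul, mul_comm t]; exact hm'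
  calc ((g ^ t : Eˣ) : E) ^ (q + 1) = (((g ^ t) ^ (q + 1) : Eˣ) : E) := by
        simp
    _ = u := by rw [h4]; rfl

lemma key_sum_s8 {F : Type*} [Field F] {ι : Type*} [DecidableEq ι] [Fintype ι] [Nonempty ι]
    (v : ι → F) (hv : Function.Injective v) (f : F[X])
    (hf : f.degree < ((Fintype.card ι - 1 : ℕ) : WithBot ℕ)) :
    ∑ i, Lagrange.nodalWeight Finset.univ v i * f.eval (v i) = 0 := by
  classical
  set s : Finset ι := Finset.univ with hs
  have hN : #s = Fintype.card ι := rfl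
  have hinj : Set.InjOn v s := hv.injOn
  have hle : (Fintype.card ι - 1 : ℕ) ≤ #s := by rw [hN]; omega
  have hflt : f.degree < (#s : WithBot ℕ) := hf.trans_le (Nat.cast_le.mpr hle)
  have hinterp : f = Lagrange.interpolate s v (fun i => f.eval (v i)) :=
    Lagrange.eq_interpolate hinj hflt
  have hc0 : f.coeff (Fintype.card ι - 1) = 0 := coeff_eq_zero_of_degree_lt hf
  rw [hinterp, Lagrange.interpolate_apply, finset_sum_coeff] at hc0
  rw [← hc0]
  refine Finset.sum_congr rfl fun i hi => ?_
  have hb : Lagrange.basis s v i = C (Lagrange.nodalWeight s v i) * Lagrange.nodal (s.erase i) v := by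
    rw [Lagrange.basis_eq_prod_sub_inv_mul_nodal_div (Finset.mem_univ i),
      ← Lagrange.nodal_erase_eq_nodal_div (Finset.mem_univ i)]
  have hcard' : #(s.erase i) = Fintype.card ι - 1 := by
    rw [Finset.card_erase_of_mem (Finset.mem_univ i), hN]
  have hdeg : (Lagrange.nodal (s.erase i) v).natDegree = Fintype.card ι - 1 := by
    rw [Lagrange.natDegree_nodal, hcard']
  have hone : (Lagrange.nodal (s.erase i) v).coeff (Fintype.card ι - 1) = 1 := by
    rw [← hdeg]; exact Lagrange.nodal_monic.coeff_natDegree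
  have hcoeff : (C (f.eval (v i)) * Lagrange.basis s v i).coeff (Fintype.card ι - 1)
      = f.eval (v i) * Lagrange.nodalWeight s v i := by
    rw [hb, coeff_C_mul, coeff_C_mul, hone, mul_one]
  rw [hcoeff, mul_comm]
end GRSAux


/-- Let `E` be the finite field with `q^2` elements, with `F_q ⊆ E` realized
as the fixed field of `x ↦ x^q`. For distinct `α_1, …, α_n ∈ F_q` and `1 ≤ k` with
`n ≥ 2k + 2`, there exist nonzero `v_1, …, v_n ∈ E` such that the generalized Reed–Solomon
code `GRS_k(α, v)` over `E` is Hermitian self-orthogonal. -/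
theorem GRS_hermitian_self_orthogonal (q : ℕ) (hq : IsPrimePow q)
    (E : Type*) [Field E] [Fintype E] (hcard : Fintype.card E = q ^ 2)
    (n k : ℕ) (hk : 1 ≤ k) (hn : 2 * k + 2 ≤ n)
    (α : Fin n → E) (hα : Function.Injective α) (hαFq : ∀ i, α i ^ q = α i) :
    ∃ v : Fin n → E, (∀ i, v i ≠ 0) ∧
      ∀ c ∈ GRS n k α v, ∀ c' ∈ GRS n k α v, ∑ i, c i * (c' i) ^ q = 0 := by
  classical
  have hq2 : 2 ≤ q := hq.two_le
  obtain ⟨p, s, hp, hs, hpq⟩ := hq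
  have hpN : p.Prime := hp.nat_prime
  -- characteristic of E is p
  haveI : CharP E (ringChar E) := ringChar.charP E
  have hcprime : (ringChar E).Prime := CharP.char_is_prime E (ringChar E)
  obtain ⟨m, hm', hcm⟩ := FiniteField.card E (ringChar E)
  have hcp : ringChar E = p := by
    have h1 : ringChar E ∣ p ^ (s * 2) := by
      refine Dvd.dvd.trans (dvd_pow_self (ringChar E) (by positivity : (m : ℕ) ≠ 0)) ?_
      rw [← hcm, hcard, ← hpq, ← pow_mul]
    exact (Nat.prime_dvd_prime_iff_eq hcprime hpN).mp (hcprime.dvd_of_dvd_pow h1)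
  haveI hEp : CharP E p := hcp ▸ ringChar.charP E
  haveI : ExpChar E p := ExpChar.prime hpN
  set φ : E →+* E := iterateFrobenius E p s with hφdef
  have hφ : ∀ x : E, φ x = x ^ q := fun x => by
    rw [hφdef, iterateFrobenius_def, hpq]
  have hφα : ∀ j, φ (α j) = α j := fun j => by rw [hφ, hαFq]
  -- the weights
  set w : Fin n → E := fun i => Lagrange.nodalWeight Finset.univ α i with hwdef
  have hw0 : ∀ i, w i ≠ 0 := fun i =>
    Lagrange.nodalWeight_ne_zero hα.injOn (Finset.mem_univ i)
  have hwfix : ∀ i, w i ^ q = w i := by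
    intro i
    rw [← hφ]
    rw [hwdef]
    simp only [Lagrange.nodalWeight]
    rw [map_prod]
    exact Finset.prod_congr rfl fun j _ => by rw [map_inv₀, map_sub, hφα, hφα]
  choose v hv0 hvq using fun i => exists_pow_succ_eq q hq2 hcard (hw0 i) (hwfix i)
  refine ⟨v, hv0, ?_⟩
  rintro c ⟨f, hf, rfl⟩ c' ⟨g, hg, rfl⟩
  set h : E[X] := g.map φ with hhdef
  have hgq : ∀ i, (g.eval (α i)) ^ q = h.eval (α i) := by
    intro i
    rw [← hφ, hhdef, ← hφα i, Polynomial.eval_map, Polynomial.eval₂_at_apply, hφα]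
  have hterm : ∀ i, (v i * f.eval (α i)) * (v i * g.eval (α i)) ^ q
      = w i * (f * h).eval (α i) := by
    intro i
    rw [mul_pow, hgq i, ← hvq i, eval_mul]
    ring
  have hne : Nonempty (Fin n) := ⟨⟨0, by omega⟩⟩
  have hdeg : (f * h).degree < ((Fintype.card (Fin n) - 1 : ℕ) : WithBot ℕ) := by
    rw [Fintype.card_fin]
    rcases eq_or_ne f 0 with rfl | hf0
    · rw [zero_mul, Polynomial.degree_zero]; exact WithBot.bot_lt_coe _
    rcases eq_or_ne h 0 with hh0 | hh0
    · rw [hh0, mul_zero, Polynomial.degree_zero]; exact WithBot.bot_lt_coe _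
    have hgd : h.degree = g.degree := Polynomial.degree_map_eq_of_injective φ.injective g
    have hg0 : g ≠ 0 := fun hzz => by simp [hhdef, hzz] at hh0
    have h1 : f.natDegree < k := (Polynomial.natDegree_lt_iff_degree_lt hf0).mpr hf
    have h2 : h.natDegree < k := by
      rw [Polynomial.natDegree_lt_iff_degree_lt hh0, hgd]; exact hg
    have h3 : (f * h).natDegree < n - 1 := by
      rw [Polynomial.natDegree_mul hf0 hh0]; omega
    exact (Polynomial.natDegree_lt_iff_degree_lt (mul_ne_zero hf0 hh0)).mp h3
  calc ∑ i, (v i * f.eval (α i)) * (v i * g.eval (α i)) ^ q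
      = ∑ i, w i * (f * h).eval (α i) := Finset.sum_congr rfl fun i _ => hterm i
    _ = 0 := key_sum_s8 α hα (f * h) hdeg
end

section
/- Over the field F_5 with 5 elements, for every choice of nonzero elements v_1, v_2, v_3, v_4 ∈ F_5, the linear code C(v) = {(v_1 f(0), v_2 f(1), v_3 f(2), v_4 f(3)) : f ∈ F_5[x], f = 0 or deg f ≤ 1} ⊆ F_5^4 is not Euclidean self-orthogonal; that is, there exist codewords c, c' ∈ C(v) with Σ_{i=1}^4 c_i c'_i ≠ 0. -/
instance : Fact (Nat.Prime 5) := ⟨by norm_num⟩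

set_option maxRecDepth 4000 in
lemma key_moments : ∀ v : Fin 4 → ZMod 5, (∀ i, v i ≠ 0) →
    ¬ (v 0 ^ 2 + v 1 ^ 2 + v 2 ^ 2 + v 3 ^ 2 = 0 ∧
       v 1 ^ 2 + 2 * v 2 ^ 2 + 3 * v 3 ^ 2 = 0 ∧
       v 1 ^ 2 + 4 * v 2 ^ 2 + 4 * v 3 ^ 2 = 0) := by
  have h5 : (5 : ZMod 5) = 0 := by decide
  decide

/-- Over `F_5`, for every choice of nonzero `v₁, v₂, v₃, v₄`, the code
`{(v₁ f(0), v₂ f(1), v₃ f(2), v₄ f(3)) : deg f ≤ 1}` is not Euclidean self-orthogonal: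
some pair of codewords has nonzero Euclidean inner product. -/
theorem example34_not_self_orthogonal (v : Fin 4 → ZMod 5) (hv : ∀ i, v i ≠ 0) :
    ∃ c ∈ GRS 4 2 ![0, 1, 2, 3] v, ∃ c' ∈ GRS 4 2 ![0, 1, 2, 3] v,
      ∑ i, c i * c' i ≠ 0 := by
  have key := key_moments v hv
  have hone : ((1 : Polynomial (ZMod 5)).degree < ((2:ℕ) : WithBot ℕ)) := by
    rw [Polynomial.degree_one]; norm_num
  have hX : ((Polynomial.X : Polynomial (ZMod 5)).degree < ((2:ℕ) : WithBot ℕ)) := by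
    rw [Polynomial.degree_X]; norm_num
  by_cases h0 : v 0 ^ 2 + v 1 ^ 2 + v 2 ^ 2 + v 3 ^ 2 = 0
  · by_cases h1 : v 1 ^ 2 + 2 * v 2 ^ 2 + 3 * v 3 ^ 2 = 0
    · have h2 : v 1 ^ 2 + 4 * v 2 ^ 2 + 4 * v 3 ^ 2 ≠ 0 := fun h2 => key ⟨h0, h1, h2⟩
      refine ⟨_, ⟨Polynomial.X, hX, rfl⟩, _, ⟨Polynomial.X, hX, rfl⟩, ?_⟩
      have h5 : (5 : ZMod 5) = 0 := by decide
      simpa [Fin.sum_univ_four] using fun h => h2 (by linear_combination h - v 3 ^ 2 * h5)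
    · refine ⟨_, ⟨1, hone, rfl⟩, _, ⟨Polynomial.X, hX, rfl⟩, ?_⟩
      simpa [Fin.sum_univ_four] using fun h => h1 (by linear_combination h)
  · refine ⟨_, ⟨1, hone, rfl⟩, _, ⟨1, hone, rfl⟩, ?_⟩
    simpa [Fin.sum_univ_four] using fun h => h0 (by linear_combination h)
end
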